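/- For every m ≥ 1 the ordered monomials satisfy the orthonormality relations Σ_{γ ∈ {1,…,d}^m} Ψ_{γω}*·Ψ_{γω'} = δ_{ωω'}·1 for all ω, ω' ∈ {1,…,n}^m; consequently, for all a, b ∈ B and all α, β ∈ {1,…,d}^m one has Σ_{γ ∈ {1,…,d}^m} τ^m_{αγ}(a)·τ^m_{γβ}(b) = τ^m_{αβ}(a·b) and (τ^m_{αβ}(a))* = τ^m_{βα}(a*). -/
import Mathlib

open scoped BigOperators

/-- The ordered monomial `Ψ_{αω} = ψ_{α₁ω₁}·ψ_{α₂ω₂}···ψ_{α_mω_m}`. -/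
def prodPsi {B : Type*} [Ring B] {d n m : ℕ} (ψ : Fin d → Fin n → B)
    (α : Fin m → Fin d) (ω : Fin m → Fin n) : B :=
  (List.ofFn fun t => ψ (α t) (ω t)).prod

/-- The iterated map `τ^m_{αβ}(a) = Σ_{ω ∈ {1,…,n}^m} Ψ_{αω}·a·Ψ_{βω}*`. -/
noncomputable def tauIter {B : Type*} [Ring B] [StarRing B] {d n m : ℕ}
    (ψ : Fin d → Fin n → B) (a : B) (α β : Fin m → Fin d) : B :=
  ∑ ω : Fin m → Fin n, prodPsi ψ α ω * a * star (prodPsi ψ β ω)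

lemma prodPsi_zero {B : Type*} [Ring B] {d n : ℕ} (ψ : Fin d → Fin n → B)
    (α : Fin 0 → Fin d) (ω : Fin 0 → Fin n) : prodPsi ψ α ω = 1 := by
  simp [prodPsi]

lemma prodPsi_succ {B : Type*} [Ring B] {d n m : ℕ} (ψ : Fin d → Fin n → B)
    (α : Fin (m+1) → Fin d) (ω : Fin (m+1) → Fin n) :
    prodPsi ψ α ω = ψ (α 0) (ω 0) * prodPsi ψ (α ∘ Fin.succ) (ω ∘ Fin.succ) := by
  simp [prodPsi, List.ofFn_succ, Function.comp]

lemma fun_succ_ext {X : Type*} {m : ℕ} (ω ω' : Fin (m+1) → X) :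
    ω = ω' ↔ ω 0 = ω' 0 ∧ ω ∘ Fin.succ = ω' ∘ Fin.succ := by
  constructor
  · rintro rfl; exact ⟨rfl, rfl⟩
  · rintro ⟨h0, hs⟩
    funext i
    cases i using Fin.cases with
    | zero => exact h0
    | succ j => exact congrFun hs j

lemma prodPsi_orth {B : Type*} [Ring B] [StarRing B] {d n : ℕ} (ψ : Fin d → Fin n → B)
    (horth : ∀ i j : Fin n, ∑ k, star (ψ k i) * ψ k j = if i = j then (1 : B) else 0) :
    ∀ (m : ℕ) (ω ω' : Fin m → Fin n),
      ∑ γ : Fin m → Fin d, star (prodPsi ψ γ ω) * prodPsi ψ γ ω'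
        = if ω = ω' then (1 : B) else 0 := by
  intro m
  induction m with
  | zero =>
      intro ω ω'
      simp [prodPsi_zero, Subsingleton.elim ω ω',
        Finset.univ_unique, Subsingleton.elim (default : Fin 0 → Fin d)]
  | succ m ih =>
      intro ω ω'
      rw [← (Fin.consEquiv (fun _ : Fin (m+1) => Fin d)).sum_comp
        (fun γ => star (prodPsi ψ γ ω) * prodPsi ψ γ ω')]
      rw [Fintype.sum_prod_type]
      have key : ∀ (k : Fin d) (γt : Fin m → Fin d),
          star (prodPsi ψ ((Fin.consEquiv _) (k, γt)) ω) *
            prodPsi ψ ((Fin.consEquiv _) (k, γt)) ω'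
          = star (prodPsi ψ γt (ω ∘ Fin.succ)) *
              (star (ψ k (ω 0)) * ψ k (ω' 0)) * prodPsi ψ γt (ω' ∘ Fin.succ) := by
        intro k γt
        have h1 : ((Fin.consEquiv (fun _ : Fin (m+1) => Fin d)) (k, γt)) = Fin.cons k γt := rfl
        rw [h1, prodPsi_succ, prodPsi_succ]
        simp only [Fin.cons_zero]
        have h2 : (Fin.cons k γt : Fin (m+1) → Fin d) ∘ Fin.succ = γt := by
          funext i; simp
        rw [h2, star_mul]
        simp [mul_assoc]
      calc ∑ k : Fin d, ∑ γt : Fin m → Fin d,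
              star (prodPsi ψ ((Fin.consEquiv _) (k, γt)) ω) *
                prodPsi ψ ((Fin.consEquiv _) (k, γt)) ω'
          = ∑ γt : Fin m → Fin d, star (prodPsi ψ γt (ω ∘ Fin.succ)) *
              (∑ k : Fin d, star (ψ k (ω 0)) * ψ k (ω' 0)) *
              prodPsi ψ γt (ω' ∘ Fin.succ) := by
            rw [Finset.sum_comm]
            refine Finset.sum_congr rfl fun γt _ => ?_
            rw [Finset.mul_sum, Finset.sum_mul]
            exact Finset.sum_congr rfl fun k _ => key k γt
        _ = if ω = ω' then 1 else 0 := by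
            rw [horth]
            by_cases h0 : ω 0 = ω' 0
            · rw [if_pos h0]
              simp only [mul_one]
              rw [ih (ω ∘ Fin.succ) (ω' ∘ Fin.succ)]
              by_cases ht : ω ∘ Fin.succ = ω' ∘ Fin.succ
              · rw [if_pos ht, if_pos ((fun_succ_ext ω ω').2 ⟨h0, ht⟩)]
              · rw [if_neg ht, if_neg (fun h => ht ((fun_succ_ext ω ω').1 h).2)]
            · rw [if_neg h0, if_neg (by rw [fun_succ_ext]; tauto)]
              simp

/-- For every `m ≥ 1` the ordered monomials satisfy the orthonormality
relations `Σ_{γ ∈ {1,…,d}^m} Ψ_{γω}*·Ψ_{γω'} = δ_{ωω'}·1`; consequently, for all `a b ∈ B`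
and all `α β ∈ {1,…,d}^m` one has `Σ_γ τ^m_{αγ}(a)·τ^m_{γβ}(b) = τ^m_{αβ}(a·b)` and
`(τ^m_{αβ}(a))* = τ^m_{βα}(a*)`. -/
theorem prodPsi_orth_and_tauIter_hom {B : Type*} [Ring B] [Algebra ℂ B] [StarRing B]
    [StarModule ℂ B] {d n : ℕ} (hd : 1 ≤ d) (hn : 1 ≤ n) (ψ : Fin d → Fin n → B)
    (horth : ∀ i j : Fin n, ∑ k, star (ψ k i) * ψ k j = if i = j then (1 : B) else 0)
    (m : ℕ) (hm : 1 ≤ m) :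
    (∀ ω ω' : Fin m → Fin n,
        ∑ γ : Fin m → Fin d, star (prodPsi ψ γ ω) * prodPsi ψ γ ω'
          = if ω = ω' then (1 : B) else 0) ∧
    (∀ (a b : B) (α β : Fin m → Fin d),
        ∑ γ : Fin m → Fin d, tauIter ψ a α γ * tauIter ψ b γ β = tauIter ψ (a * b) α β) ∧
    (∀ (a : B) (α β : Fin m → Fin d),
        star (tauIter ψ a α β) = tauIter ψ (star a) β α) := by
  have orth := prodPsi_orth ψ horth m
  refine ⟨orth, ?_, ?_⟩
  · intro a b α β
    unfold tauIter
    calc ∑ γ : Fin m → Fin d, (∑ ω, prodPsi ψ α ω * a * star (prodPsi ψ γ ω)) *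
            ∑ ω', prodPsi ψ γ ω' * b * star (prodPsi ψ β ω')
        = ∑ ω, ∑ ω', prodPsi ψ α ω * a *
            (∑ γ : Fin m → Fin d, star (prodPsi ψ γ ω) * prodPsi ψ γ ω') *
            (b * star (prodPsi ψ β ω')) := by
          simp only [Finset.sum_mul_sum]
          rw [Finset.sum_comm]
          refine Finset.sum_congr rfl fun ω _ => ?_
          rw [Finset.sum_comm]
          refine Finset.sum_congr rfl fun ω' _ => ?_
          simp only [Finset.mul_sum, Finset.sum_mul]
          exact Finset.sum_congr rfl fun γ _ => by simp [mul_assoc]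
      _ = ∑ ω, prodPsi ψ α ω * (a * b) * star (prodPsi ψ β ω) := by
          refine Finset.sum_congr rfl fun ω _ => ?_
          rw [Finset.sum_eq_single ω]
          · rw [orth, if_pos rfl]; simp [mul_assoc]
          · intro ω' _ hne
            rw [orth, if_neg (fun h => hne h.symm)]
            simp
          · simp
  · intro a α β
    unfold tauIter
    rw [star_sum]
    refine Finset.sum_congr rfl fun ω _ => ?_
    simp [star_mul, mul_assoc]
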